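/- Let n be a positive integer and for q = 1,2,3 let α₁q, α₂q, α₃q be integers, each triple satisfying conditions (2.9), and let C⁽q⁾(i,j,k) = α₁q·i + α₂q·j + α₃q·k on (ZMod n)³. If the determinant d₃ of the 3×3 matrix (αₚq) satisfies gcd(d₃,n) = 1, then the three cubes are orthogonal: the map (i,j,k) ↦ (C⁽¹⁾(i,j,k), C⁽²⁾(i,j,k), C⁽³⁾(i,j,k)) from (ZMod n)³ to (ZMod n)³ is injective. -/

import Mathlib

/-- Conditions (2.9) on the parameters `α₁, α₂, α₃` of a linear cube modulo `n`,
with `A = α₁ + α₂ + α₃`. -/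
def Cond29 (n : ℕ) (α₁ α₂ α₃ : ℤ) : Prop :=
  Int.gcd α₁ n = 1 ∧ Int.gcd α₂ n = 1 ∧ Int.gcd α₃ n = 1 ∧
  Int.gcd (α₁ + α₂) n = 1 ∧ Int.gcd (α₁ + α₃) n = 1 ∧ Int.gcd (α₂ + α₃) n = 1 ∧
  Int.gcd (α₁ - α₂) n = 1 ∧ Int.gcd (α₁ - α₃) n = 1 ∧ Int.gcd (α₂ - α₃) n = 1 ∧
  Int.gcd (α₁ + α₂ + α₃) n = 1 ∧
  Int.gcd (α₁ + α₂ + α₃ - 2 * α₁) n = 1 ∧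
  Int.gcd (α₁ + α₂ + α₃ - 2 * α₂) n = 1 ∧
  Int.gcd (α₁ + α₂ + α₃ - 2 * α₃) n = 1

/-!
The superposition of the three cubes is the linear map `v ↦ v ᵥ* A` on `(ZMod n)³`, where `A` is
the reduction of `(αₚq)` modulo `n`. Since `det A` is the reduction of `d₃`, which is a unit modulo
`n`, the matrix `A` is invertible, so this map is injective.
-/

open Matrix

theorem ZMod.isUnit_intCast_of_gcd_eq_one {n : ℕ} {d : ℤ} (h : Int.gcd d n = 1) :
    IsUnit (d : ZMod n) :=
  (ZMod.unitOfIsCoprime d (Int.isCoprime_iff_gcd_eq_one.mpr h)).isUnit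

theorem Matrix.isUnit_map_intCast_of_gcd_det_eq_one {m : Type*} [Fintype m] [DecidableEq m]
    {n : ℕ} {A : Matrix m m ℤ} (h : Int.gcd A.det n = 1) :
    IsUnit (A.map ((↑) : ℤ → ZMod n)) := by
  rw [isUnit_iff_isUnit_det, ← Int.cast_det]
  exact ZMod.isUnit_intCast_of_gcd_eq_one h

theorem Matrix.injective_vec3_vecMul {R : Type*} [CommRing R] {A : Matrix (Fin 3) (Fin 3) R}
    (hA : IsUnit A) :
    Function.Injective (fun v : R × R × R => fun q : Fin 3 =>
      A 0 q * v.1 + A 1 q * v.2.1 + A 2 q * v.2.2) := by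
  have hvec : Function.Injective (fun v : R × R × R => ![v.1, v.2.1, v.2.2]) := by
    rintro ⟨a, b, c⟩ ⟨a', b', c'⟩ h
    simp_all [funext_iff, Fin.forall_fin_succ]
  convert (vecMul_injective_of_isUnit hA).comp hvec using 1
  ext v q
  simp [vecMul, dotProduct, Fin.sum_univ_three, mul_comm]

theorem orthogonal_pandiagonal_latin_cubes_general
    (n : ℕ) (α : Fin 3 → Fin 3 → ℤ)
    (hdet : Int.gcd (Matrix.det (Matrix.of fun p q : Fin 3 => α p q)) n = 1) :
    Function.Injective (fun v : ZMod n × ZMod n × ZMod n => fun q : Fin 3 =>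
      (α 0 q : ZMod n) * v.1 + (α 1 q : ZMod n) * v.2.1 + (α 2 q : ZMod n) * v.2.2) :=
  injective_vec3_vecMul (isUnit_map_intCast_of_gcd_det_eq_one hdet)

/-- **Theorem 2.6.** Let `C⁽q⁾(i,j,k) = α₁q·i + α₂q·j + α₃q·k`
(`q = 1,2,3`), each triple satisfying conditions (2.9).  If the determinant `d₃`
of the matrix `(αₚq)` is coprime to `n`, the three cubes are orthogonal. -/
theorem orthogonal_pandiagonal_latin_cubes
    (n : ℕ) (hn : 0 < n) (α : Fin 3 → Fin 3 → ℤ)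
    (hc : ∀ q : Fin 3, Cond29 n (α 0 q) (α 1 q) (α 2 q))
    (hdet : Int.gcd (Matrix.det (Matrix.of fun p q : Fin 3 => α p q)) n = 1) :
    Function.Injective (fun v : ZMod n × ZMod n × ZMod n => fun q : Fin 3 =>
      (α 0 q : ZMod n) * v.1 + (α 1 q : ZMod n) * v.2.1 + (α 2 q : ZMod n) * v.2.2) :=
  orthogonal_pandiagonal_latin_cubes_general n α hdet
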